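/- arXiv:1907.07650 — 5 statements merged into one kernel-verified Lean document; each statement's English description precedes it below -/
import Mathlib

section
/- A tree T is nonsingular (its adjacency matrix has trivial null space) if and only if T has a perfect matching. -/
open SimpleGraph Matrix

attribute [local instance] Classical.propDecidable

noncomputable section

variable {V : Type*}

/-- A graph is singular if its adjacency matrix (over ℝ) has nontrivial kernel. -/
def IsSingular [Fintype V] (G : SimpleGraph V) : Prop :=
  ∃ x : V → ℝ, x ≠ 0 ∧ G.adjMatrix ℝ *ᵥ x = 0

/-- The support of the null space of the adjacency matrix. -/
def nullSupp [Fintype V] (G : SimpleGraph V) : Set V :=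
  {v | ∃ x : V → ℝ, G.adjMatrix ℝ *ᵥ x = 0 ∧ x v ≠ 0}

/-- The core: all neighbours of supported vertices. -/
def core [Fintype V] (G : SimpleGraph V) : Set V :=
  ⋃ v ∈ nullSupp G, G.neighborSet v

/-- Vertex set of the N-forest: complement of the closed neighbourhood of the support. -/
def fnVerts [Fintype V] (G : SimpleGraph V) : Set V :=
  (nullSupp G ∪ core G)ᶜ

/-- A matching as a set of pairwise disjoint edges of `G`. -/
def IsMatchingSet (G : SimpleGraph V) (M : Set (Sym2 V)) : Prop :=
  M ⊆ G.edgeSet ∧ M.Pairwise fun e f => ∀ v : V, ¬(v ∈ e ∧ v ∈ f)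

/-- `M` saturates `v`. -/
def Saturates (M : Set (Sym2 V)) (v : V) : Prop := ∃ e ∈ M, v ∈ e

/-- A perfect matching saturates every vertex. -/
def IsPerfectMatchingSet (G : SimpleGraph V) (M : Set (Sym2 V)) : Prop :=
  IsMatchingSet G M ∧ ∀ v : V, Saturates M v

/-- Matching number. -/
def matchNum [Fintype V] (G : SimpleGraph V) : ℕ :=
  sSup {n | ∃ M : Set (Sym2 V), IsMatchingSet G M ∧ M.ncard = n}

/-- Maximum matchings. -/
def IsMaxMatching [Fintype V] (G : SimpleGraph V) (M : Set (Sym2 V)) : Prop :=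
  IsMatchingSet G M ∧ M.ncard = matchNum G

/-- Independent set of vertices. -/
def IsIndepSet (G : SimpleGraph V) (I : Set V) : Prop :=
  I.Pairwise fun a b => ¬ G.Adj a b

/-- Independence number. -/
def indepNum [Fintype V] (G : SimpleGraph V) : ℕ :=
  sSup {n | ∃ I : Set V, _root_.IsIndepSet G I ∧ I.ncard = n}

/-- Maximum independent sets. -/
def IsMaxIndep [Fintype V] (G : SimpleGraph V) (I : Set V) : Prop :=
  _root_.IsIndepSet G I ∧ I.ncard = _root_.indepNum G

/-- The graph `G` with all vertices in `S` deleted (kept as isolated vertices). -/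
def avoid (G : SimpleGraph V) (S : Set V) : SimpleGraph V where
  Adj a b := G.Adj a b ∧ a ∉ S ∧ b ∉ S
  symm := ⟨fun a b h => ⟨h.1.symm, h.2.2, h.2.1⟩⟩
  loopless := ⟨fun a h => G.loopless.irrefl a h.1⟩

/-- `G` is unicyclic: connected with as many edges as vertices. -/
def IsUnicyclic [Fintype V] (G : SimpleGraph V) : Prop :=
  G.Connected ∧ G.edgeFinset.card = Fintype.card V

/-- `C` is the vertex set of the (unique) cycle of `G`:
the induced subgraph on `C` is connected and 2-regular. -/
def IsCycleVerts [Fintype V] (G : SimpleGraph V) (C : Set V) : Prop :=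
  C.Nonempty ∧ (G.induce C).Connected ∧ ∀ v : C, (G.induce C).degree v = 2

/-- Vertices of the pendant tree of `G` at the cycle vertex `v`: all vertices
reachable from `v` after deleting the other cycle vertices. -/
def pendantVerts (G : SimpleGraph V) (C : Set V) (v : V) : Set V :=
  {u | (avoid G (C \ {v})).Reachable v u}

lemma mem_pendantVerts_self (G : SimpleGraph V) (C : Set V) (v : V) :
    v ∈ pendantVerts G C v := Reachable.refl v

/-- The pendant tree of `G` at `v` (as an induced subgraph). -/
def pendantTree (G : SimpleGraph V) (C : Set V) (v : V) :
    SimpleGraph (pendantVerts G C v) := G.induce (pendantVerts G C v)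

/-- The rest of the graph, `G − G{v}`. -/
def pendantRest (G : SimpleGraph V) (C : Set V) (v : V) :
    SimpleGraph ((pendantVerts G C v)ᶜ : Set V) := G.induce (pendantVerts G C v)ᶜ

/-- `v` is matched in a graph `H`: every maximum matching of `H` saturates `v`. -/
def MatchedIn {W : Type*} [Fintype W] (H : SimpleGraph W) (w : W) : Prop :=
  ∀ M : Set (Sym2 W), IsMaxMatching H M → Saturates M w

/-- A unicyclic graph is of Type I if some cycle vertex is matched in its pendant tree. -/
def TypeI [Fintype V] (G : SimpleGraph V) (C : Set V) : Prop :=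
  ∃ v ∈ C, MatchedIn (pendantTree G C v) ⟨v, mem_pendantVerts_self G C v⟩

/-- Type II: every cycle vertex is missed by some maximum matching of its pendant tree. -/
def TypeII [Fintype V] (G : SimpleGraph V) (C : Set V) : Prop :=
  ∀ v ∈ C, ¬ MatchedIn (pendantTree G C v) ⟨v, mem_pendantVerts_self G C v⟩

end

/-!
If `u` is a leaf of a forest with neighbour `v`, row `u` of the adjacency matrix forces `x v = 0`
on a null vector `x`, after which `x u` is determined by row `v`; so null vectors correspond to
null vectors of the forest with `u` and `v` deleted. Likewise every perfect matching contains the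
edge `uv`. Deleting leaves with their neighbours reduces both sides to an edgeless graph, where
each holds exactly when no vertex is left. Deleted vertices stay in the vertex type as isolated
vertices outside the set `L` of remaining ones.
-/

namespace SimpleGraph

variable {V : Type*} {G : SimpleGraph V}

lemma IsAcyclic.exists_forall_adj_iff_eq [Finite V] (hG : G.IsAcyclic) {a b : V} (hab : G.Adj a b) :
    ∃ u v : V, ∀ w, G.Adj u w ↔ w = v := by
  have : Nonempty V := ⟨a⟩
  obtain ⟨u, v, p, hp, hmax⟩ := Walk.exists_isPath_forall_isPath_length_le_length G
  have hnil : ¬p.Nil := fun hnil => by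
    simpa [hnil.length_eq_zero] using hmax a b (Walk.cons hab .nil) (by simp [hab.ne])
  refine ⟨u, p.snd, fun w => ⟨fun huw => hG.eq_snd_of_adj_start hp huw ?_,
    fun hw => hw ▸ p.adj_snd hnil⟩⟩
  by_contra hw
  simpa using hmax w v (p.cons huw.symm) (hp.cons hw)

lemma mem_edgeSet_avoid {S : Set V} {e : Sym2 V} :
    e ∈ (avoid G S).edgeSet ↔ e ∈ G.edgeSet ∧ ∀ w ∈ e, w ∉ S := by
  induction e using Sym2.ind with
  | h a b => simp [avoid]

lemma eq_of_mem_edgeSet_of_forall_adj_iff {u v : V} (hleaf : ∀ w, G.Adj u w ↔ w = v)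
    {e : Sym2 V} (he : e ∈ G.edgeSet) (hue : u ∈ e) : e = s(u, v) := by
  induction e using Sym2.ind with
  | h a b =>
    rcases Sym2.mem_iff.1 hue with rfl | rfl
    · rw [(hleaf b).1 he]
    · rw [(hleaf a).1 (G.adj_symm he), Sym2.eq_swap]

lemma adjMatrix_mulVec_apply_of_forall_adj_iff [Fintype V] {u v : V}
    (hleaf : ∀ w, G.Adj u w ↔ w = v) (x : V → ℝ) : (G.adjMatrix ℝ *ᵥ x) u = x v := by
  have : G.neighborFinset u = {v} := by ext w; simp [hleaf]
  rw [adjMatrix_mulVec_apply, this, Finset.sum_singleton]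

lemma adjMatrix_mulVec_single_of_forall_adj_iff [Fintype V] {u v : V}
    (hleaf : ∀ w, G.Adj u w ↔ w = v) (c : ℝ) (w : V) :
    (G.adjMatrix ℝ *ᵥ Pi.single u c) w = if w = v then c else 0 := by
  simp [G.adj_comm w u, hleaf]

lemma avoid_adjMatrix_mulVec_apply_of_mem [Fintype V] {S : Set V} (y : V → ℝ) {w : V}
    (hw : w ∈ S) : ((avoid G S).adjMatrix ℝ *ᵥ y) w = 0 := by
  rw [adjMatrix_mulVec_apply]
  exact Finset.sum_eq_zero fun b hb => absurd hw ((mem_neighborFinset _ _ _).1 hb).2.1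

lemma avoid_adjMatrix_mulVec_apply_of_notMem [Fintype V] {S : Set V} {y : V → ℝ}
    (hy : ∀ s ∈ S, y s = 0) {w : V} (hw : w ∉ S) :
    ((avoid G S).adjMatrix ℝ *ᵥ y) w = (G.adjMatrix ℝ *ᵥ y) w := by
  simp only [mulVec, dotProduct, adjMatrix_apply]
  refine Finset.sum_congr rfl fun b _ => ?_
  by_cases hb : b ∈ S
  · simp [hy b hb]
  · simp [avoid, hw, hb]

def IsSingularOn [Fintype V] (G : SimpleGraph V) (L : Set V) : Prop :=
  ∃ x : V → ℝ, x ≠ 0 ∧ (∀ w ∉ L, x w = 0) ∧ G.adjMatrix ℝ *ᵥ x = 0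

def HasMatchingCovering (G : SimpleGraph V) (L : Set V) : Prop :=
  ∃ M : Set (Sym2 V), IsMatchingSet G M ∧ ∀ w ∈ L, Saturates M w

section Leaf

variable {u v : V} (hleaf : ∀ w, G.Adj u w ↔ w = v) {L : Set V}
include hleaf

lemma IsSingularOn.avoid_of_forall_adj_iff [Fintype V] (h : IsSingularOn G L) :
    IsSingularOn (avoid G {u, v}) (L \ {u, v}) := by
  obtain ⟨x, hx0, hxL, hx⟩ := h
  have hxv : x v = 0 := by
    rw [← adjMatrix_mulVec_apply_of_forall_adj_iff hleaf x, hx, Pi.zero_apply]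
  set y : V → ℝ := x - Pi.single u (x u)
  have hAy : G.adjMatrix ℝ *ᵥ y = fun w => if w = v then -x u else 0 := by
    ext w
    rw [mulVec_sub, hx, Pi.sub_apply, adjMatrix_mulVec_single_of_forall_adj_iff hleaf]
    split_ifs <;> simp
  have hyuv : ∀ s ∈ ({u, v} : Set V), y s = 0 := by
    rintro s (rfl | rfl)
    · simp [y]
    · simp [y, hxv, ((hleaf s).2 rfl).ne']
  refine ⟨y, fun hy0 => ?_, fun w hw => ?_, ?_⟩
  · have hxu : x u = 0 := by simpa [hy0] using congrFun hAy v
    exact hx0 (by rw [sub_eq_zero.1 hy0, hxu, Pi.single_zero])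
  · by_cases hwuv : w ∈ ({u, v} : Set V)
    · exact hyuv w hwuv
    · have hwu : w ≠ u := fun h => hwuv (Or.inl h)
      simp [y, hwu, hxL w fun hwL => hw ⟨hwL, hwuv⟩]
  · ext w
    by_cases hw : w ∈ ({u, v} : Set V)
    · exact avoid_adjMatrix_mulVec_apply_of_mem _ hw
    · have hwv : w ≠ v := fun h => hw (Or.inr h)
      rw [avoid_adjMatrix_mulVec_apply_of_notMem hyuv hw, hAy]
      exact if_neg hwv

lemma IsSingularOn.of_avoid_of_forall_adj_iff [Fintype V] (hu : u ∈ L)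
    (h : IsSingularOn (avoid G {u, v}) (L \ {u, v})) : IsSingularOn G L := by
  obtain ⟨y, hy0, hyL, hy⟩ := h
  have hyuv : ∀ s ∈ ({u, v} : Set V), y s = 0 := fun s hs => hyL s fun h => h.2 hs
  have hAy : ∀ w ≠ v, (G.adjMatrix ℝ *ᵥ y) w = 0 := by
    intro w hwv
    by_cases hwu : w = u
    · rw [hwu, adjMatrix_mulVec_apply_of_forall_adj_iff hleaf]
      exact hyuv v (by simp)
    · rw [← avoid_adjMatrix_mulVec_apply_of_notMem hyuv (by simp [hwu, hwv]), hy, Pi.zero_apply]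
  refine ⟨y - Pi.single u ((G.adjMatrix ℝ *ᵥ y) v), fun hx0 => hy0 ?_, fun w hw => ?_, ?_⟩
  · ext w
    by_cases hwu : w = u
    · rw [hwu]
      exact hyuv u (by simp)
    · simpa [hwu] using congrFun hx0 w
  · have : w ≠ u := fun h => hw (h ▸ hu)
    simp [this, hyL w fun h => hw h.1]
  · ext w
    rw [mulVec_sub, Pi.sub_apply, adjMatrix_mulVec_single_of_forall_adj_iff hleaf]
    split_ifs with hwv
    · rw [hwv, sub_self, Pi.zero_apply]
    · rw [hAy w hwv, sub_zero, Pi.zero_apply]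

lemma HasMatchingCovering.avoid_of_forall_adj_iff (hu : u ∈ L) (h : HasMatchingCovering G L) :
    HasMatchingCovering (avoid G {u, v}) (L \ {u, v}) := by
  obtain ⟨M, ⟨hME, hMdisj⟩, hML⟩ := h
  obtain ⟨e, heM, hue⟩ := hML u hu
  obtain rfl := eq_of_mem_edgeSet_of_forall_adj_iff hleaf (hME heM) hue
  refine ⟨M \ {s(u, v)},
    ⟨fun f ⟨hfM, hf⟩ => mem_edgeSet_avoid.2 ⟨hME hfM, fun w hwf hw => ?_⟩,
      hMdisj.mono Set.sdiff_subset⟩, fun w ⟨hwL, hw⟩ => ?_⟩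
  · exact hMdisj hfM heM hf w ⟨hwf, by simpa using hw⟩
  · obtain ⟨f, hfM, hwf⟩ := hML w hwL
    refine ⟨f, ⟨hfM, ?_⟩, hwf⟩
    rintro rfl
    exact hw (by simpa using hwf)

lemma HasMatchingCovering.of_avoid_of_forall_adj_iff
    (h : HasMatchingCovering (avoid G {u, v}) (L \ {u, v})) : HasMatchingCovering G L := by
  obtain ⟨M, ⟨hME, hMdisj⟩, hML⟩ := h
  have hdisj : ∀ f ∈ M, ∀ w, ¬(w ∈ f ∧ w ∈ s(u, v)) := fun f hf w ⟨hwf, hw⟩ =>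
    (mem_edgeSet_avoid.1 (hME hf)).2 w hwf (by simpa using hw)
  refine ⟨insert s(u, v) M, ⟨Set.insert_subset ((hleaf v).2 rfl)
    fun f hf => (mem_edgeSet_avoid.1 (hME hf)).1, Set.pairwise_insert.2 ⟨hMdisj,
      fun f hf _ => ⟨fun w hw => hdisj f hf w hw.symm, hdisj f hf⟩⟩⟩, fun w hwL => ?_⟩
  by_cases hw : w ∈ ({u, v} : Set V)
  · exact ⟨s(u, v), Set.mem_insert _ _, by simpa using hw⟩
  · obtain ⟨f, hf, hwf⟩ := hML w ⟨hwL, hw⟩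
    exact ⟨f, Set.mem_insert_of_mem _ hf, hwf⟩

lemma isSingularOn_iff_avoid_of_forall_adj_iff [Fintype V] (hu : u ∈ L) :
    IsSingularOn G L ↔ IsSingularOn (avoid G {u, v}) (L \ {u, v}) :=
  ⟨.avoid_of_forall_adj_iff hleaf, .of_avoid_of_forall_adj_iff hleaf hu⟩

lemma hasMatchingCovering_iff_avoid_of_forall_adj_iff (hu : u ∈ L) :
    HasMatchingCovering G L ↔ HasMatchingCovering (avoid G {u, v}) (L \ {u, v}) :=
  ⟨.avoid_of_forall_adj_iff hleaf hu, .of_avoid_of_forall_adj_iff hleaf⟩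

end Leaf

lemma not_isSingularOn_empty [Fintype V] : ¬ IsSingularOn G ∅ :=
  fun ⟨_, hx0, hx, _⟩ => hx0 (funext fun w => hx w (Set.notMem_empty w))

lemma hasMatchingCovering_empty : HasMatchingCovering G ∅ :=
  ⟨∅, ⟨Set.empty_subset _, Set.pairwise_empty _⟩, fun _ hw => (Set.notMem_empty _ hw).elim⟩

lemma isSingularOn_of_forall_not_adj [Fintype V] {L : Set V} {w : V} (hw : w ∈ L)
    (hiso : ∀ b, ¬ G.Adj w b) : IsSingularOn G L := by
  refine ⟨Pi.single w 1, by simp,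
    fun b hb => Pi.single_eq_of_ne (by rintro rfl; exact hb hw) _, ?_⟩
  ext b
  simp [G.adj_comm b w, hiso]

lemma not_hasMatchingCovering_of_forall_not_adj {L : Set V} {w : V} (hw : w ∈ L)
    (hiso : ∀ b, ¬ G.Adj w b) : ¬ HasMatchingCovering G L := by
  rintro ⟨M, ⟨hME, -⟩, hML⟩
  obtain ⟨e, heM, hwe⟩ := hML w hw
  obtain ⟨b, rfl⟩ := Sym2.mem_iff_exists.1 hwe
  exact hiso b (hME heM)

theorem IsAcyclic.not_isSingularOn_iff_hasMatchingCovering [Fintype V] (hG : G.IsAcyclic)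
    {L : Set V} (hL : ∀ a b, G.Adj a b → a ∈ L) :
    ¬ IsSingularOn G L ↔ HasMatchingCovering G L := by
  induction hn : L.ncard using Nat.strong_induction_on generalizing G L with
  | _ n ih =>
  rcases L.eq_empty_or_nonempty with rfl | ⟨w, hw⟩
  · exact iff_of_true not_isSingularOn_empty hasMatchingCovering_empty
  by_cases hiso : ∀ b, ¬ G.Adj w b
  · exact iff_of_false (not_not.2 (isSingularOn_of_forall_not_adj hw hiso))
      (not_hasMatchingCovering_of_forall_not_adj hw hiso)
  obtain ⟨b, hwb⟩ := not_forall_not.1 hiso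
  obtain ⟨u, v, hleaf⟩ := hG.exists_forall_adj_iff_eq hwb
  have hu : u ∈ L := hL u v ((hleaf v).2 rfl)
  have hcard : (L \ {u, v}).ncard < n :=
    hn ▸ Set.ncard_lt_ncard (Set.sdiff_ssubset_left_iff.2 ⟨u, hu, Or.inl rfl⟩)
  have hG' : (avoid G {u, v}).IsAcyclic := hG.anti fun _ _ h => h.1
  rw [isSingularOn_iff_avoid_of_forall_adj_iff hleaf hu,
    hasMatchingCovering_iff_avoid_of_forall_adj_iff hleaf hu]
  exact ih _ hcard hG' (fun a b h => ⟨hL a b h.1, h.2.1⟩) rfl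

end SimpleGraph

theorem tree_nonsingular_iff_perfect_matching {V : Type*} [Fintype V]
    (G : SimpleGraph V) (hT : G.IsTree) :
    ¬ IsSingular G ↔ ∃ M : Set (Sym2 V), IsPerfectMatchingSet G M := by
  simpa [SimpleGraph.IsSingularOn, IsSingular, SimpleGraph.HasMatchingCovering,
    IsPerfectMatchingSet] using
    hT.isAcyclic.not_isSingularOn_iff_hasMatchingCovering (L := Set.univ) fun _ _ _ => trivial
end

section
/- For a tree T, the support of the null space of its adjacency matrix is an independent set of T. That is, no two vertices in Supp(T) are adjacent. -/
open SimpleGraph Matrix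

attribute [local instance] Classical.propDecidable

namespace SimpleGraph

variable {G : SimpleGraph V}

/-- The first vertex of a longest path is a leaf. -/
theorem IsAcyclic.exists_existsUnique_adj [Finite V] (hG : G.IsAcyclic) {u v : V}
    (huv : G.Adj u v) : ∃ a, ∃! b, G.Adj a b := by
  have : Nonempty V := ⟨u⟩
  obtain ⟨a, c, p, hp, hmax⟩ := Walk.exists_isPath_forall_isPath_length_le_length G
  have hnil : ¬p.Nil := fun h => by
    have := hmax u v huv.toWalk (by simp [huv.ne])
    rw [h.length_eq_zero] at this
    simp at this
  refine ⟨a, p.snd, p.adj_snd hnil, fun b hab => hG.eq_snd_of_adj_start hp hab ?_⟩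
  by_contra hb
  have := hmax b c (Walk.cons hab.symm p) (hp.cons hb)
  simp at this

theorem IsAcyclic.eq_zero_or_eq_zero_of_adjMatrix_mulVec_eq_zero {R : Type*}
    [NonAssocSemiring R] [Fintype V] (hG : G.IsAcyclic) {z : V → R}
    (hz : G.adjMatrix R *ᵥ z = 0) {u v : V} (huv : G.Adj u v) : z u = 0 ∨ z v = 0 := by
  by_contra! h
  -- Restricted to the support of `z`, the forest has a leaf `a`; the kernel equation at `a`
  -- then reads `z b = 0` for its unique neighbour `b` in the support.
  let H := avoid G {w | z w = 0}
  have hH : H.IsAcyclic := hG.anti fun _ _ hab => hab.1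
  obtain ⟨a, b, ⟨hab, ha, hb⟩, hleaf⟩ := hH.exists_existsUnique_adj (v := v) ⟨huv, h.1, h.2⟩
  simp only [Set.mem_ofPred_eq] at ha hb
  have hsum : ∑ x ∈ G.neighborFinset a, z x = z b :=
    Finset.sum_eq_single_of_mem b (by simpa using hab) fun x hx hxb =>
      by_contra fun hx0 => hxb (hleaf x ⟨by simpa using hx, ha, hx0⟩)
  exact hb (by rw [← hsum, ← adjMatrix_mulVec_apply, hz, Pi.zero_apply])

end SimpleGraph

theorem AddSubmonoid.exists_mem_apply_ne_zero_and_apply_ne_zero {ι M : Type*} [AddZeroClass M]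
    (p : AddSubmonoid (ι → M)) {x y : ι → M} (hx : x ∈ p) (hy : y ∈ p) {i j : ι}
    (hxi : x i ≠ 0) (hyj : y j ≠ 0) : ∃ z ∈ p, z i ≠ 0 ∧ z j ≠ 0 := by
  by_cases hxj : x j = 0
  · by_cases hyi : y i = 0
    · exact ⟨x + y, p.add_mem hx hy, by simpa [hyi] using hxi, by simpa [hxj] using hyj⟩
    · exact ⟨y, hy, hyi, hyj⟩
  · exact ⟨x, hx, hxi, hxj⟩

theorem supp_isIndepSet {V : Type*} [Fintype V] (G : SimpleGraph V) (hT : G.IsTree) :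
    _root_.IsIndepSet G (nullSupp G) := by
  rintro u ⟨x, hx, hxu⟩ v ⟨y, hy, hyv⟩ - huv
  have hmem {w : V → ℝ} : w ∈ (LinearMap.ker (G.adjMatrix ℝ).mulVecLin).toAddSubmonoid ↔
      G.adjMatrix ℝ *ᵥ w = 0 := by simp
  obtain ⟨z, hz, hzu, hzv⟩ := AddSubmonoid.exists_mem_apply_ne_zero_and_apply_ne_zero _
    (hmem.2 hx) (hmem.2 hy) hxu hyv
  exact (hT.isAcyclic.eq_zero_or_eq_zero_of_adjMatrix_mulVec_eq_zero (hmem.1 hz) huv).elim hzu hzv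
end

section
/- Let T be a tree with a perfect matching and let v be any vertex of T. Then there exist maximum independent sets I_1 and I_2 of T such that v ∈ I_1 and v ∉ I_2. -/
/-! Colour the tree properly with two colours. Sending each vertex to the edge of the perfect
matching that covers it is injective on any independent set, since two vertices sharing a
matching edge are adjacent; so no independent set is larger than the matching. On a colour
class this map is also onto, because every matching edge has one end of each colour. Hence both
colour classes are maximum independent sets, and `v` lies in exactly one of them. -/

open SimpleGraph Matrix

attribute [local instance] Classical.propDecidable

section

variable {V : Type*} {G : SimpleGraph V}

lemma IsMatchingSet.eq_of_mem_of_mem {M : Set (Sym2 V)} (hM : IsMatchingSet G M)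
    {e f : Sym2 V} (he : e ∈ M) (hf : f ∈ M) {u : V} (hue : u ∈ e) (huf : u ∈ f) : e = f := by
  by_contra hne
  exact hM.2 he hf hne u ⟨hue, huf⟩

lemma IsPerfectMatchingSet.exists_adj {M : Set (Sym2 V)} (hM : IsPerfectMatchingSet G M)
    (v : V) : ∃ w, G.Adj v w := by
  obtain ⟨e, he, hve⟩ := hM.2 v
  obtain ⟨w, rfl⟩ := Sym2.mem_iff_exists.mp hve
  exact ⟨w, hM.1.1 he⟩

lemma IsIndepSet.injOn {I : Set V} (hI : _root_.IsIndepSet G I) {f : V → Sym2 V}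
    (hf : ∀ u ∈ I, u ∈ f u ∧ f u ∈ G.edgeSet) : Set.InjOn f I := by
  intro a ha b hb hfab
  by_contra hab
  have hfa : f a = s(a, b) := (Sym2.mem_and_mem_iff hab).mp ⟨(hf a ha).1, hfab ▸ (hf b hb).1⟩
  exact hI ha hb hab (G.mem_edgeSet.mp (hfa ▸ (hf a ha).2))

lemma IsPerfectMatchingSet.ncard_le [Finite V] {M : Set (Sym2 V)}
    (hM : IsPerfectMatchingSet G M) {I : Set V} (hI : _root_.IsIndepSet G I) :
    I.ncard ≤ M.ncard := by
  choose f hfM hf using hM.2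
  exact Set.ncard_le_ncard_of_injOn f (fun u _ => hfM u)
    (hI.injOn fun u _ => ⟨hf u, hM.1.1 (hfM u)⟩) M.toFinite

lemma isMaxIndep_of_forall_ncard_le [Fintype V] {I : Set V} (hI : _root_.IsIndepSet G I)
    (hmax : ∀ J, _root_.IsIndepSet G J → J.ncard ≤ I.ncard) : IsMaxIndep G I := by
  refine ⟨hI, Eq.symm <| IsGreatest.csSup_eq ⟨⟨I, hI, rfl⟩, ?_⟩⟩
  rintro _ ⟨J, hJ, rfl⟩
  exact hmax J hJ

namespace SimpleGraph.IsBipartiteWith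

variable {s t : Set V}

lemma isIndepSet_left (h : G.IsBipartiteWith s t) : _root_.IsIndepSet G s :=
  fun _ ha _ hb _ hab => h.disjoint.notMem_of_mem_left hb (h.mem_of_mem_adj ha hab)

lemma ncard_left_eq [Finite V] (h : G.IsBipartiteWith s t) {M : Set (Sym2 V)}
    (hM : IsPerfectMatchingSet G M) : s.ncard = M.ncard := by
  choose f hfM hf using hM.2
  have hinj : Set.InjOn f s := h.isIndepSet_left.injOn fun u _ => ⟨hf u, hM.1.1 (hfM u)⟩
  have himage : f '' s = M := by
    refine subset_antisymm (Set.image_subset_iff.mpr fun u _ => hfM u) fun e he => ?_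
    induction e using Sym2.ind with
    | _ x y =>
      have hedge : ∀ u ∈ s(x, y), f u = s(x, y) :=
        fun u hu => hM.1.eq_of_mem_of_mem (hfM u) he (hf u) hu
      rcases h.mem_of_adj (hM.1.1 he) with ⟨hx, -⟩ | ⟨-, hy⟩
      · exact ⟨x, hx, hedge x (Sym2.mem_mk_left x y)⟩
      · exact ⟨y, hy, hedge y (Sym2.mem_mk_right x y)⟩
  rw [← himage, hinj.ncard_image]

lemma isMaxIndep_left [Fintype V] (h : G.IsBipartiteWith s t) {M : Set (Sym2 V)}
    (hM : IsPerfectMatchingSet G M) : IsMaxIndep G s :=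
  isMaxIndep_of_forall_ncard_le h.isIndepSet_left fun _ hJ =>
    (h.ncard_left_eq hM).symm ▸ hM.ncard_le hJ

end SimpleGraph.IsBipartiteWith

end

theorem nonsingular_tree_maxIndep {V : Type*} [Fintype V] (G : SimpleGraph V) (hT : G.IsTree)
    (hpm : ∃ M : Set (Sym2 V), IsPerfectMatchingSet G M) (v : V) :
    ∃ I₁ I₂ : Set V, IsMaxIndep G I₁ ∧ IsMaxIndep G I₂ ∧ v ∈ I₁ ∧ v ∉ I₂ := by
  obtain ⟨M, hM⟩ := hpm
  obtain ⟨s, t, hst⟩ := hT.isAcyclic.isBipartite.exists_isBipartiteWith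
  obtain ⟨w, hvw⟩ := hM.exists_adj v
  rcases hst.mem_of_adj hvw with ⟨hvs, -⟩ | ⟨hvt, -⟩
  · exact ⟨s, t, hst.isMaxIndep_left hM, hst.symm.isMaxIndep_left hM, hvs,
      hst.disjoint.notMem_of_mem_left hvs⟩
  · exact ⟨t, s, hst.symm.isMaxIndep_left hM, hst.isMaxIndep_left hM, hvt,
      hst.disjoint.notMem_of_mem_right hvt⟩
end

section
/- Let T be a tree and I an independent set of T containing some vertex of Core(T). Then I is not a maximum independent set of T. -/
open SimpleGraph Matrix

attribute [local instance] Classical.propDecidable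

/-!
Take a null vector `x` of the tree with `x v ≠ 0` for a neighbour `v` of `c`; let `S` be its
support and `N` the set of vertices with a neighbour in `S`. The entries of `x` around any vertex
sum to zero, so a vertex with one neighbour in `S` has at least two. As a finite forest has fewer
edges than vertices, this forces `S` to be independent, and double counting the edges between a
nonempty `C ⊆ N` and `S` gives `|C| < |N(C) ∩ S|`. Applied to `C = I ∩ N ∋ c`, replacing
`I ∩ (S ∪ N)` by `S` yields a larger independent set.
-/

open Finset

theorem Finset.one_lt_card_filter_ne_zero {ι M : Type*} [AddCommMonoid M] {s : Finset ι}
    {f : ι → M} (hsum : ∑ i ∈ s, f i = 0) {a : ι} (ha : a ∈ s) (hfa : f a ≠ 0) :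
    1 < #{i ∈ s | f i ≠ 0} := by
  by_contra! hle
  have hmem : a ∈ {i ∈ s | f i ≠ 0} := mem_filter.2 ⟨ha, hfa⟩
  have hsingle : {i ∈ s | f i ≠ 0} = {a} :=
    eq_singleton_iff_unique_mem.2 ⟨hmem, fun b hb => card_le_one.1 hle b hb a hmem⟩
  rw [← sum_filter_ne_zero, hsingle, sum_singleton] at hsum
  exact hfa hsum

namespace SimpleGraph

variable {V : Type*} [Fintype V] {G : SimpleGraph V}

section Forest

variable [DecidableRel G.Adj]

theorem IsAcyclic.card_edgeFinset_lt_card [Nonempty V] (hG : G.IsAcyclic) :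
    #G.edgeFinset < Fintype.card V := by
  obtain ⟨T, hGT, -, hT⟩ := connected_top.exists_isTree_le_of_le_of_isAcyclic le_top hG
  calc #G.edgeFinset ≤ #T.edgeFinset := card_le_card (edgeFinset_mono hGT)
    _ < Fintype.card V := by rw [← hT.card_edgeFinset]; exact Nat.lt_succ_self _

theorem IsAcyclic.card_edgeFinset_lt_of_support_subset (hG : G.IsAcyclic) {s : Finset V}
    (hs : s.Nonempty) (hsupp : G.support ⊆ s) : #G.edgeFinset < #s := by
  have : Nonempty (s : Set V) := hs.coe_sort
  rw [← card_edgeFinset_induce_of_support_subset hsupp]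
  convert (hG.induce (s : Set V)).card_edgeFinset_lt_card
  simp

theorem IsAcyclic.exists_degree_le_one [Nonempty V] (hG : G.IsAcyclic) :
    ∃ v, G.degree v ≤ 1 := by
  by_contra! h
  have hsum : ∑ _v : V, 2 ≤ ∑ v, G.degree v := Finset.sum_le_sum fun v _ => h v
  rw [sum_degrees_eq_twice_card_edges, Finset.sum_const, Finset.card_univ, smul_eq_mul] at hsum
  have := hG.card_edgeFinset_lt_card
  omega

theorem degree_induce_eq_card_filter (s : Set V) [DecidablePred (· ∈ s)] (v : s) :
    (G.induce s).degree v = #{w ∈ G.neighborFinset v | w ∈ s} := by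
  rw [← card_neighborFinset_eq_degree, ← card_map, map_neighborFinset_induce]
  congr 1
  ext
  simp

end Forest

section NullVector

variable {R : Type*} [NonAssocSemiring R] {x : V → R}

theorem one_lt_card_neighborFinset_filter_ne_zero [DecidableRel G.Adj] (hx : G.adjMatrix R *ᵥ x = 0) {v w : V}
    (hvw : G.Adj v w) (hw : x w ≠ 0) : 1 < #{u ∈ G.neighborFinset v | x u ≠ 0} :=
  one_lt_card_filter_ne_zero (by rw [← adjMatrix_mulVec_apply, hx, Pi.zero_apply])
    ((mem_neighborFinset _ _ _).2 hvw) hw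

theorem IsAcyclic.eq_zero_or_eq_zero_of_adj (hG : G.IsAcyclic) (hx : G.adjMatrix R *ᵥ x = 0)
    {a b : V} (hab : G.Adj a b) : x a = 0 ∨ x b = 0 := by
  by_contra! hne
  set s : Set V := {v | x v ≠ 0 ∧ ∃ w, G.Adj v w ∧ x w ≠ 0}
  have : Nonempty s := ⟨⟨a, hne.1, b, hab, hne.2⟩⟩
  obtain ⟨⟨v, hxv, w, hvw, hxw⟩, hv⟩ := (hG.induce s).exists_degree_le_one
  rw [degree_induce_eq_card_filter] at hv
  dsimp only at hv
  have hsub : {u ∈ G.neighborFinset v | x u ≠ 0} ⊆ {u ∈ G.neighborFinset v | u ∈ s} := by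
    intro u hu
    rw [mem_filter, mem_neighborFinset] at hu ⊢
    exact ⟨hu.1, hu.2, v, hu.1.symm, hxv⟩
  have := card_le_card hsub
  have := one_lt_card_neighborFinset_filter_ne_zero hx hvw hxw
  omega

theorem IsAcyclic.card_lt_card_support_inter_neighbors (hG : G.IsAcyclic)
    (hx : G.adjMatrix R *ᵥ x = 0) {C : Finset V} (hC : C.Nonempty)
    (hCx : ∀ c ∈ C, ∃ w, G.Adj c w ∧ x w ≠ 0) :
    #C < #{w | x w ≠ 0 ∧ ∃ c ∈ C, G.Adj c w} := by
  set T : Finset V := {w | x w ≠ 0 ∧ ∃ c ∈ C, G.Adj c w}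
  have hdisj : Disjoint (C : Set V) T := by
    rw [Set.disjoint_left]
    intro c hc hcT
    obtain ⟨w, hcw, hxw⟩ := hCx c hc
    exact (hG.eq_zero_or_eq_zero_of_adj hx hcw).elim (mem_filter.1 hcT).2.1 hxw
  have hbip := between_isBipartiteWith (G := G) hdisj
  set H := G.between C T
  have hedges : #H.edgeFinset < #(C ∪ T) :=
    (hG.anti between_le).card_edgeFinset_lt_of_support_subset (hC.mono subset_union_left)
      (by simpa using isBipartiteWith_support_subset hbip)
  have hdeg : ∀ c ∈ C, 2 ≤ H.degree c := by
    intro c hc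
    obtain ⟨w, hcw, hxw⟩ := hCx c hc
    calc 2 ≤ #{u ∈ G.neighborFinset c | x u ≠ 0} :=
          one_lt_card_neighborFinset_filter_ne_zero hx hcw hxw
      _ ≤ #(H.neighborFinset c) := by
          refine card_le_card fun u hu => ?_
          rw [mem_filter, mem_neighborFinset] at hu
          rw [mem_neighborFinset, between_adj]
          exact ⟨hu.1, Or.inl ⟨hc, mem_filter.2 ⟨mem_univ _, hu.2, c, hc, hu.1⟩⟩⟩
      _ = H.degree c := card_neighborFinset_eq_degree _ _
  have hsum : #C • 2 ≤ ∑ c ∈ C, H.degree c := card_nsmul_le_sum _ _ _ hdeg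
  rw [isBipartiteWith_sum_degrees_eq_card_edges hbip, smul_eq_mul] at hsum
  have := card_union_le C T
  omega

theorem IsAcyclic.isIndepSet_sdiff_union_support (hG : G.IsAcyclic)
    (hx : G.adjMatrix R *ᵥ x = 0) {I : Set V} (hI : _root_.IsIndepSet G I) :
    _root_.IsIndepSet G
      (I \ (Function.support x ∪ {u | ∃ w, G.Adj u w ∧ x w ≠ 0}) ∪ Function.support x) := by
  intro a ha b hb hab hadj
  simp only [Set.mem_union, Set.mem_sdiff, Function.mem_support, Set.mem_ofPred_eq,
    not_or] at ha hb
  rcases ha with ⟨haI, -, haN⟩ | hax <;> rcases hb with ⟨hbI, -, hbN⟩ | hbx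
  · exact hI haI hbI hab hadj
  · exact haN ⟨b, hadj, hbx⟩
  · exact hbN ⟨a, hadj.symm, hax⟩
  · exact (hG.eq_zero_or_eq_zero_of_adj hx hadj).elim hax hbx

theorem IsAcyclic.exists_isIndepSet_card_lt (hG : G.IsAcyclic)
    (hx : G.adjMatrix R *ᵥ x = 0) {I : Finset V} (hI : _root_.IsIndepSet G I) {v c : V}
    (hvc : G.Adj v c) (hv : x v ≠ 0) (hcI : c ∈ I) :
    ∃ J : Finset V, _root_.IsIndepSet G J ∧ #I < #J := by
  set S : Finset V := (Function.support x).toFinset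
  set N : Finset V := {u | ∃ w, G.Adj u w ∧ x w ≠ 0}
  set C : Finset V := I ∩ N
  set T : Finset V := {w | x w ≠ 0 ∧ ∃ c ∈ C, G.Adj c w}
  have hCT : #C < #T := hG.card_lt_card_support_inter_neighbors hx
    ⟨c, mem_inter.2 ⟨hcI, mem_filter.2 ⟨mem_univ _, v, hvc.symm, hv⟩⟩⟩
    fun u hu => (mem_filter.1 (mem_inter.1 hu).2).2
  refine ⟨I \ (S ∪ N) ∪ S, ?_, ?_⟩
  · simpa [S, N] using hG.isIndepSet_sdiff_union_support hx hI
  have hcover : I ⊆ I \ (S ∪ N) ∪ I ∩ S ∪ C := by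
    intro u hu
    by_cases huN : u ∈ N
    · exact mem_union_right _ (mem_inter.2 ⟨hu, huN⟩)
    by_cases huS : u ∈ S
    · exact mem_union_left _ (mem_union_right _ (mem_inter.2 ⟨hu, huS⟩))
    · exact mem_union_left _ (mem_union_left _ (mem_sdiff.2 ⟨hu, by simp [huS, huN]⟩))
  have hST : #(I ∩ S) + #T ≤ #S := by
    have hdisj : Disjoint (I ∩ S) T := Finset.disjoint_left.2 fun u hu huT => by
      obtain ⟨-, c', hc', hc'u⟩ := (mem_filter.1 huT).2
      exact hI (mem_inter.1 hc').1 (mem_inter.1 hu).1 hc'u.ne hc'u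
    rw [← card_union_of_disjoint hdisj]
    refine card_le_card (union_subset inter_subset_right fun u hu => ?_)
    simpa [S] using (mem_filter.1 hu).2.1
  have hJ : #(I \ (S ∪ N) ∪ S) = #(I \ (S ∪ N)) + #S :=
    card_union_of_disjoint (Finset.disjoint_left.2 fun u hu huS =>
      (mem_sdiff.1 hu).2 (mem_union_left _ huS))
  have := card_le_card hcover
  have := card_union_le (I \ (S ∪ N) ∪ I ∩ S) C
  have := card_union_le (I \ (S ∪ N)) (I ∩ S)
  omega

end NullVector

end SimpleGraph

theorem IsIndepSet.ncard_le_indepNum {V : Type*} [Fintype V] {G : SimpleGraph V} {I : Set V}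
    (hI : _root_.IsIndepSet G I) : I.ncard ≤ _root_.indepNum G :=
  le_csSup ⟨Nat.card V, fun _ ⟨J, _, hJ⟩ => hJ ▸ Set.ncard_le_card J⟩ ⟨I, hI, rfl⟩

theorem core_vertex_not_maxIndep_general {V : Type*} [Fintype V] (G : SimpleGraph V) (hT : G.IsTree)
    (I : Set V) (c : V) (hc : c ∈ core G) (hcI : c ∈ I) :
    ¬ IsMaxIndep G I := by
  rintro ⟨hI, hImax⟩
  obtain ⟨v, ⟨x, hx, hxv⟩, hvc⟩ : ∃ v ∈ nullSupp G, G.Adj v c := by simpa [core] using hc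
  obtain ⟨J, hJ, hIJ⟩ := hT.isAcyclic.exists_isIndepSet_card_lt hx (I := I.toFinset)
    (by rwa [Set.coe_toFinset]) hvc hxv (Set.mem_toFinset.2 hcI)
  have hJ_le := hJ.ncard_le_indepNum
  rw [Set.ncard_coe_finset, ← hImax, Set.ncard_eq_toFinset_card'] at hJ_le
  exact hIJ.not_ge hJ_le

theorem core_vertex_not_maxIndep {V : Type*} [Fintype V] (G : SimpleGraph V) (hT : G.IsTree)
    (I : Set V) (hI : _root_.IsIndepSet G I) (c : V) (hc : c ∈ core G) (hcI : c ∈ I) :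
    ¬ IsMaxIndep G I :=
  core_vertex_not_maxIndep_general G hT I c hc hcI
end

section
/- Let G be a unicyclic graph with cycle C, let v ∈ V(C) with v ∈ Supp(G{v}), and let u be a neighbor of v inside the pendant tree G{v}. Then u ∉ Supp(G{v} − v); in particular u is not in the support of the forest G − C. -/
open SimpleGraph Matrix

attribute [local instance] Classical.propDecidable

/-!
The pendant tree `G{v}` is acyclic: deleting an edge of the cycle `C` from the unicyclic graph
`G` leaves a connected graph with one edge fewer than vertices, i.e. a tree, so every cycle of `G`
runs through that edge, which `G{v}` (meeting `C` only in `v`) does not contain. The support of a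
forest is independent: a null vector nonzero at both ends of an edge would yield a nonempty set
of vertices (those of its support with a neighbour in its support) each having two neighbours in
the set.

Since `v ∈ Supp(G{v})`, a null vector of `G{v} - v` extended by zero satisfies every equation of
`G{v}` except possibly the one at `v`, and that one follows from the symmetry of the adjacency
matrix by pairing with a null vector nonzero at `v`. Hence `Supp(G{v} - v) ⊆ Supp(G{v})`, which
cannot contain the neighbour `u` of `v`. Finally `G{v} - v` is a union of components of `G - C`,
so null vectors of `G - C` restrict to null vectors of `G{v} - v`.
-/

section NullSpace

variable {W : Type*} [Fintype W] {H : SimpleGraph W}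

theorem exists_null_vector_ne_zero_ne_zero {a b : W} (ha : a ∈ nullSupp H)
    (hb : b ∈ nullSupp H) :
    ∃ s : W → ℝ, H.adjMatrix ℝ *ᵥ s = 0 ∧ s a ≠ 0 ∧ s b ≠ 0 := by
  obtain ⟨x, hx, hxa⟩ := ha
  obtain ⟨y, hy, hyb⟩ := hb
  by_cases hxb : x b = 0
  · by_cases hya : y a = 0
    · exact ⟨x + y, by rw [mulVec_add, hx, hy, add_zero], by simp [hya, hxa],
        by simp [hxb, hyb]⟩
    · exact ⟨y, hy, hya, hyb⟩
  · exact ⟨x, hx, hxa, hxb⟩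

theorem exists_adj_ne_of_mulVec_eq_zero {s : W → ℝ} (hs : H.adjMatrix ℝ *ᵥ s = 0) {p q : W}
    (hpq : H.Adj p q) (hp : s p ≠ 0) : ∃ r, H.Adj q r ∧ r ≠ p ∧ s r ≠ 0 := by
  by_contra! h
  have hrow : ∑ r ∈ H.neighborFinset q, s r = s p :=
    Finset.sum_eq_single_of_mem p (by simpa using hpq.symm)
      fun r hr hrp => h r (by simpa using hr) hrp
  rw [← adjMatrix_mulVec_apply, hs] at hrow
  exact hp hrow.symm

end NullSpace

theorem SimpleGraph.IsAcyclic.exists_forall_adj_eq {W : Type*} [Finite W] [Nonempty W]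
    {H : SimpleGraph W} (hH : H.IsAcyclic) : ∃ u w, ∀ x, H.Adj u x → x = w := by
  obtain ⟨u, v, p, hp, hmax⟩ := Walk.exists_isPath_forall_isPath_length_le_length H
  refine ⟨u, p.snd, fun x hux => hH.eq_snd_of_adj_start hp hux ?_⟩
  by_contra hx
  have := hmax x v (p.cons hux.symm) (hp.cons hx)
  simp at this

theorem SimpleGraph.IsAcyclic.isIndepSet_nullSupp {W : Type*} [Fintype W] {H : SimpleGraph W}
    (hH : H.IsAcyclic) : IsIndepSet H (nullSupp H) := by
  intro a ha b hb _ hab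
  obtain ⟨s, hs, hsa, hsb⟩ := exists_null_vector_ne_zero_ne_zero ha hb
  let S : Set W := {w | s w ≠ 0 ∧ ∃ p, H.Adj w p ∧ s p ≠ 0}
  have : Nonempty S := ⟨⟨a, hsa, b, hab, hsb⟩⟩
  obtain ⟨⟨u, hsu, p, hup, hsp⟩, w, hw⟩ := (hH.induce S).exists_forall_adj_eq
  obtain ⟨r, hur, hrp, hsr⟩ := exists_adj_ne_of_mulVec_eq_zero hs hup.symm hsp
  have hpw := hw ⟨p, hsp, u, hup.symm, hsu⟩ hup
  have hrw := hw ⟨r, hsr, u, hur.symm, hsu⟩ hur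
  exact hrp (congrArg Subtype.val (hrw.trans hpw.symm))

theorem Matrix.IsSymm.mulVec_eq_zero_of_forall_ne {ι R : Type*} [Fintype ι] [CommRing R]
    [NoZeroDivisors R] {A : Matrix ι ι R} (hA : A.IsSymm) {x z : ι → R} (hx : A *ᵥ x = 0)
    {v : ι} (hxv : x v ≠ 0) (hz : ∀ i, i ≠ v → (A *ᵥ z) i = 0) : A *ᵥ z = 0 := by
  have hdot : x ⬝ᵥ (A *ᵥ z) = x v * (A *ᵥ z) v :=
    Finset.sum_eq_single_of_mem v (Finset.mem_univ v) fun i _ hi => by simp [hz i hi]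
  have hzero : x ⬝ᵥ (A *ᵥ z) = 0 := by
    rw [dotProduct_mulVec, ← mulVec_transpose, hA.eq, hx, zero_dotProduct]
  funext i
  by_cases hi : i = v
  · subst hi
    simpa [hxv] using hdot.symm.trans hzero
  · exact hz i hi

section Induce

variable {V : Type*} [Fintype V] (G : SimpleGraph V)

theorem induce_adjMatrix_mulVec_apply (S : Set V) [Fintype S] (f : V → ℝ) (i : S) :
    ((G.induce S).adjMatrix ℝ *ᵥ fun j : S => f j) i =
      (G.adjMatrix ℝ *ᵥ S.indicator f) i := by
  rw [mulVec, mulVec, dotProduct, dotProduct, ← Fintype.sum_subtype_add_sum_subtype (· ∈ S)]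
  simp [Set.indicator_of_mem, fun j : {j // j ∉ S} => Set.indicator_of_notMem j.2 f]
  -- the sums over `S` still differ in their `Fintype S` instances
  convert rfl

theorem mem_nullSupp_induce_iff {S : Set V} [Fintype S] {a : S} :
    a ∈ nullSupp (G.induce S) ↔
      ∃ f : V → ℝ, (∀ i : S, (G.adjMatrix ℝ *ᵥ S.indicator f) i = 0) ∧ f a ≠ 0 := by
  constructor
  · rintro ⟨y, hy, hya⟩
    have hext : (fun j : S => Function.extend Subtype.val y 0 j) = y :=
      funext fun j => Subtype.val_injective.extend_apply y 0 j
    rw [← hext] at hy hya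
    exact ⟨_, fun i => (induce_adjMatrix_mulVec_apply G S _ i).symm.trans (congrFun hy i), hya⟩
  · rintro ⟨f, hf, hfa⟩
    exact ⟨fun j => f j,
      funext fun i => (induce_adjMatrix_mulVec_apply G S f i).trans (hf i), hfa⟩

theorem mem_nullSupp_induce_of_inclusion_mem {S T : Set V} [Fintype S] [Fintype T]
    (hST : S ⊆ T) (hcl : ∀ a ∈ S, ∀ b ∈ T, G.Adj a b → b ∈ S) {a : S}
    (ha : Set.inclusion hST a ∈ nullSupp (G.induce T)) : a ∈ nullSupp (G.induce S) := by
  obtain ⟨f, hf, hfa⟩ := (mem_nullSupp_induce_iff G).1 ha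
  refine (mem_nullSupp_induce_iff G).2 ⟨f, fun i => ?_, hfa⟩
  rw [← hf (Set.inclusion hST i), adjMatrix_mulVec_apply, adjMatrix_mulVec_apply]
  refine Finset.sum_congr rfl fun w hw => ?_
  by_cases hwS : w ∈ S
  · rw [Set.indicator_of_mem hwS, Set.indicator_of_mem (hST hwS)]
  · have hwT : w ∉ T := fun hwT => hwS (hcl i i.2 w hwT ((mem_neighborFinset _ _ _).1 hw))
    rw [Set.indicator_of_notMem hwS, Set.indicator_of_notMem hwT]

theorem inclusion_mem_nullSupp_induce_of_mem_diff_singleton {T : Set V} {v : V} [Fintype T]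
    [Fintype ↥(T \ {v})] (hvT : v ∈ T)
    (hv : (⟨v, hvT⟩ : T) ∈ nullSupp (G.induce T)) {a : ↥(T \ {v})}
    (ha : a ∈ nullSupp (G.induce (T \ {v}))) :
    Set.inclusion Set.sdiff_subset a ∈ nullSupp (G.induce T) := by
  obtain ⟨x, hx, hxv⟩ := hv
  obtain ⟨f, hf, hfa⟩ := (mem_nullSupp_induce_iff G).1 ha
  refine ⟨fun j : T => (T \ {v}).indicator f j,
    (isSymm_adjMatrix _).mulVec_eq_zero_of_forall_ne hx hxv fun i hi => ?_, ?_⟩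
  · have hiv : (i : V) ∈ T \ {v} := ⟨i.2, fun h => hi (Subtype.ext h)⟩
    refine (induce_adjMatrix_mulVec_apply G T _ i).trans ?_
    rw [Set.indicator_indicator, Set.inter_eq_right.2 Set.sdiff_subset]
    exact hf ⟨i, hiv⟩
  · simpa [Set.indicator_of_mem a.2] using hfa

end Induce

theorem SimpleGraph.Connected.not_isAcyclic_of_degree_eq_two {W : Type*} [Fintype W]
    {H : SimpleGraph W} [DecidableRel H.Adj] (hH : H.Connected) (hdeg : ∀ w, H.degree w = 2) :
    ¬H.IsAcyclic := fun hac => by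
  have hedges := (IsTree.mk hH hac).card_edgeFinset
  have hsum := H.sum_degrees_eq_twice_card_edges
  have hpos : 0 < Fintype.card W := Fintype.card_pos_iff.2 hH.nonempty
  simp only [hdeg, Finset.sum_const, Finset.card_univ, smul_eq_mul] at hsum
  omega

theorem IsUnicyclic.mem_edges_of_isCycle {V : Type*} [Fintype V] {G : SimpleGraph V}
    (hG : IsUnicyclic G) {u w : V} {c : G.Walk u u} {d : G.Walk w w} (hc : c.IsCycle)
    (hd : d.IsCycle) {e : Sym2 V} (he : e ∈ c.edges) : e ∈ d.edges := by
  induction e using Sym2.ind with | _ a b => ?_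
  have hbridge : ¬G.IsBridge s(a, b) := fun h => h.notMem_edges_of_isCycle hc he
  have hcard : Nat.card (G.deleteEdges {s(a, b)}).edgeSet + 1 = Nat.card V := by
    rw [edgeSet_deleteEdges, Nat.card_coe_set_eq,
      Set.ncard_sdiff_singleton_add_one (c.edges_subset_edgeSet he), Nat.card_eq_fintype_card,
      ← hG.2, ← coe_edgeFinset, Set.ncard_coe_finset]
  have htree : (G.deleteEdges {s(a, b)}).IsTree :=
    isTree_iff_connected_and_card.2 ⟨hG.1.connected_delete_edge_of_not_isBridge hbridge, hcard⟩
  by_contra hd_avoids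
  exact htree.isAcyclic _
    (Walk.IsCycle.toDeleteEdges G {s(a, b)} hd fun e he heq => hd_avoids (heq ▸ he))

theorem SimpleGraph.Walk.mem_of_mem_support_map_induce {V : Type*} {G : SimpleGraph V}
    {S : Set V} {u w : S} (p : (G.induce S).Walk u w) {x : V}
    (hx : x ∈ (p.map (Embedding.induce S).toHom).support) : x ∈ S := by
  rw [support_map] at hx
  obtain ⟨t, -, rfl⟩ := List.mem_map.1 hx
  exact t.2

theorem IsCycleVerts.exists_isCycle {V : Type*} [Fintype V] {G : SimpleGraph V} {C : Set V}
    (hC : IsCycleVerts G C) :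
    ∃ (u : V) (c : G.Walk u u), c.IsCycle ∧ ∀ x ∈ c.support, x ∈ C := by
  obtain ⟨_, hconn, hdeg⟩ := hC
  obtain ⟨u, c, hc⟩ : ∃ (u : C) (c : (G.induce C).Walk u u), c.IsCycle := by
    by_contra! h
    exact hconn.not_isAcyclic_of_degree_eq_two hdeg h
  exact ⟨u, c.map (Embedding.induce C).toHom,
    (Walk.isCycle_map_iff_of_injective Subtype.val_injective).2 hc,
    fun x => c.mem_of_mem_support_map_induce⟩

section Pendant

variable {V : Type*} {G : SimpleGraph V} {C : Set V} {v : V}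

theorem eq_of_mem_pendantVerts_of_mem {w : V} (hw : w ∈ pendantVerts G C v) (hwC : w ∈ C) :
    w = v := by
  by_contra hwv
  obtain ⟨p⟩ := hw
  obtain ⟨x, hxw, -, -⟩ := Walk.not_nil_iff.1 (Walk.not_nil_of_ne hwv : ¬p.reverse.Nil)
  exact hxw.2.1 ⟨hwC, hwv⟩

theorem mem_pendantVerts_of_adj {a b : V} (ha : a ∈ pendantVerts G C v) (hab : G.Adj a b)
    (hb : b ∉ C \ {v}) : b ∈ pendantVerts G C v :=
  have ha' : a ∉ C \ {v} := fun h => h.2 (eq_of_mem_pendantVerts_of_mem ha h.1)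
  Reachable.trans ha (Adj.reachable (G := avoid G (C \ {v})) ⟨hab, ha', hb⟩)

theorem pendantTree_isAcyclic [Fintype V] (hG : IsUnicyclic G) (hC : IsCycleVerts G C) :
    (pendantTree G C v).IsAcyclic := by
  intro w d hd
  obtain ⟨u, c, hc, hcC⟩ := hC.exists_isCycle
  set d' := d.map (Embedding.induce (pendantVerts G C v)).toHom
  have hd' : d'.IsCycle := (Walk.isCycle_map_iff_of_injective Subtype.val_injective).2 hd
  have hd'P : ∀ x ∈ d'.support, x ∈ pendantVerts G C v :=
    fun x => d.mem_of_mem_support_map_induce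
  have hnil := hc.not_nil
  have he := hG.mem_edges_of_isCycle hc hd' (c.mk_start_snd_mem_edges hnil)
  have hu := eq_of_mem_pendantVerts_of_mem (hd'P _ (d'.fst_mem_support_of_mem_edges he))
    (hcC _ c.start_mem_support)
  have hsnd := eq_of_mem_pendantVerts_of_mem (hd'P _ (d'.snd_mem_support_of_mem_edges he))
    (hcC _ (c.snd_mem_support_of_mem_edges (c.mk_start_snd_mem_edges hnil)))
  exact (c.adj_snd hnil).ne (hu.trans hsnd.symm)

end Pendant

theorem neighbor_not_in_supp {V : Type*} [Fintype V] (G : SimpleGraph V) (C : Set V)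
    (hG : IsUnicyclic G) (hC : IsCycleVerts G C) (v : V) (hv : v ∈ C)
    (hvs : (⟨v, mem_pendantVerts_self G C v⟩ : pendantVerts G C v) ∈
      nullSupp (pendantTree G C v))
    (u : V) (hadj : G.Adj v u)
    (hu1 : u ∈ pendantVerts G C v \ {v}) (hu2 : u ∈ (Cᶜ : Set V)) :
    (⟨u, hu1⟩ : ↥(pendantVerts G C v \ {v})) ∉
        nullSupp (G.induce (pendantVerts G C v \ {v})) ∧
    (⟨u, hu2⟩ : ↥(Cᶜ : Set V)) ∉ nullSupp (G.induce (Cᶜ : Set V)) := by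
  have hu_pendant : (⟨u, hu1⟩ : ↥(pendantVerts G C v \ {v})) ∉
      nullSupp (G.induce (pendantVerts G C v \ {v})) := fun hu =>
    (pendantTree_isAcyclic hG hC).isIndepSet_nullSupp hvs
      (inclusion_mem_nullSupp_induce_of_mem_diff_singleton G _ hvs hu)
      (fun h => hu1.2 (congrArg Subtype.val h).symm) hadj
  refine ⟨hu_pendant, fun hu => hu_pendant (mem_nullSupp_induce_of_inclusion_mem G ?_ ?_ hu)⟩
  · exact fun w hw hwC => hw.2 (eq_of_mem_pendantVerts_of_mem hw.1 hwC)
  · exact fun a ha b hb hab =>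
      ⟨mem_pendantVerts_of_adj ha.1 hab fun h => hb h.1, fun h => hb (h ▸ hv)⟩
end
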